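/- arXiv:math/9701202 — 7 statements merged into one kernel-verified Lean document; each statement's English description precedes it below -/
import Mathlib

section
/- The set X is invariant under the action of G on L(G,d)^{ℚ^{<ℕ}}: if f⃗ ∈ X and g ∈ G then g·f⃗ ∈ X. -/
open Set Topology

/-- `d` is a metric on the group `G` which is right-invariant, bounded by `1`,
and compatible with the topology of `G` (the `d`-balls around each point form a
neighbourhood basis). -/
def IsRightInvariantCompatibleMetric {G : Type*} [Group G] [TopologicalSpace G]
    (d : G → G → ℝ) : Prop :=
  (∀ g h, d g h = d h g) ∧
  (∀ g h, d g h = 0 ↔ g = h) ∧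
  (∀ g h k, d g k ≤ d g h + d h k) ∧
  (∀ g h k, d (g * k) (h * k) = d g h) ∧
  (∀ g h, d g h ≤ 1) ∧
  (∀ x : G, (nhds x).HasBasis (fun ε : ℝ => 0 < ε) (fun ε => {y | d x y < ε}))

/-- `L(G,d)`: the set of functions `f : G → [0,1]` with
`|f g₁ - f g₂| ≤ d g₁ g₂` for all `g₁ g₂`. -/
def LGd {G : Type*} (d : G → G → ℝ) : Set (G → ℝ) :=
  {f | (∀ g, f g ∈ Icc (0 : ℝ) 1) ∧ ∀ g₁ g₂, |f g₁ - f g₂| ≤ d g₁ g₂}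

/-- The sequence `s q₀ q₁ q₂ 0 m n`. -/
def seqT (s : List ℚ) (q₀ q₁ q₂ : ℚ) (m n : ℕ) : List ℚ :=
  s ++ [q₀, q₁, q₂, 0, (m : ℚ), (n : ℚ)]

/-- The sequence `s q₀ q₁ q₂ 1 m n`. -/
def seqU (s : List ℚ) (q₀ q₁ q₂ : ℚ) (m n : ℕ) : List ℚ :=
  s ++ [q₀, q₁, q₂, 1, (m : ℚ), (n : ℚ)]

/-- Condition (1), with `g₀` ranging over the set `S`:
for `t = s q₀ q₁ q₂ 0 m n`, `f_t(g₀) < q₁ - ε` or `f_s(g₀) ≤ q₀ + ε`. -/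
def Cond1 {G : Type*} (f : List ℚ → G → ℝ) (S : Set G) : Prop :=
  ∀ (s : List ℚ), ∀ g₀ ∈ S, ∀ (m n : ℕ) (q₀ q₁ q₂ ε : ℚ),
    q₀ ∈ Ioo (0 : ℚ) 1 → q₁ ∈ Ioo (0 : ℚ) 1 → q₂ ∈ Ioo (0 : ℚ) 1 → ε ∈ Ioo (0 : ℚ) 1 →
    0 < q₀ - ε → q₀ + ε < 1 → 0 < q₁ - ε → q₁ + ε < 1 → 0 < q₂ - ε → q₂ + ε < 1 →
    (f (seqT s q₀ q₁ q₂ m n) g₀ < (q₁ : ℝ) - (ε : ℝ) ∨ f s g₀ ≤ (q₀ : ℝ) + (ε : ℝ))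

/-- Condition (2), with `g₀` ranging over the set `S`:
for `t = s q₀ q₁ q₂ 0 m n` and `u = s q₀ q₁ q₂ 1 m n`,
`f_u(g₀) ≥ q₂ + ε` or `f_t(g₀) ≥ q₁ - ε`. -/
def Cond2 {G : Type*} (f : List ℚ → G → ℝ) (S : Set G) : Prop :=
  ∀ (s : List ℚ), ∀ g₀ ∈ S, ∀ (m n : ℕ) (q₀ q₁ q₂ ε : ℚ),
    q₀ ∈ Ioo (0 : ℚ) 1 → q₁ ∈ Ioo (0 : ℚ) 1 → q₂ ∈ Ioo (0 : ℚ) 1 → ε ∈ Ioo (0 : ℚ) 1 →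
    0 < q₀ - ε → q₀ + ε < 1 → 0 < q₁ - ε → q₁ + ε < 1 → 0 < q₂ - ε → q₂ + ε < 1 →
    ((q₂ : ℝ) + (ε : ℝ) ≤ f (seqU s q₀ q₁ q₂ m n) g₀ ∨
      (q₁ : ℝ) - (ε : ℝ) ≤ f (seqT s q₀ q₁ q₂ m n) g₀)

/-- Condition (3), with `g₀` ranging over the set `S` and the witness `g₁`
ranging over the set `T`: if `f_s(g₀) < q₀` then there are `0 < q₂ < q₁ < q₀`,
`g₁ ∈ T` with `d(g₀,g₁) < ε`, and `m, n` such that `f_u(g₁) < q₂` for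
`u = s q₀ q₁ q₂ 1 m n`. -/
def Cond3 {G : Type*} (d : G → G → ℝ) (f : List ℚ → G → ℝ) (S T : Set G) : Prop :=
  ∀ (s : List ℚ), ∀ g₀ ∈ S, ∀ q₀ ∈ Ioo (0 : ℚ) 1, ∀ ε ∈ Ioo (0 : ℚ) 1,
    f s g₀ < (q₀ : ℝ) →
    ∃ (q₁ q₂ : ℚ) (g₁ : G) (m n : ℕ),
      g₁ ∈ T ∧ 0 < q₂ ∧ q₂ < q₁ ∧ q₁ < q₀ ∧ d g₀ g₁ < (ε : ℝ) ∧
      f (seqU s q₀ q₁ q₂ m n) g₁ < (q₂ : ℝ)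

/-- Hjorth's set `X ⊆ L(G,d)^{ℚ^{<ℕ}}`: the elements `f⃗` all of whose
coordinates lie in `L(G,d)` and which satisfy conditions (1), (2), (3) with
respect to the countable dense subgroup `G₀`. -/
def HjorthX {G : Type*} [Group G] (d : G → G → ℝ) (G₀ : Subgroup G) :
    Set (List ℚ → G → ℝ) :=
  {f | (∀ s, f s ∈ LGd d) ∧ Cond1 f (G₀ : Set G) ∧ Cond2 f (G₀ : Set G) ∧
    Cond3 d f (G₀ : Set G) (G₀ : Set G)}

/-- The topology `τ` on `X`, generated by the subbasic sets
`{f⃗ ∈ X : f_s(g₀) < q₀}` for `s ∈ ℚ^{<ℕ}`, `g₀ ∈ G₀`, `q₀ ∈ ℚ`. -/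
def hjorthTau {G : Type*} [Group G] (d : G → G → ℝ) (G₀ : Subgroup G) :
    TopologicalSpace ↥(HjorthX d G₀) :=
  TopologicalSpace.generateFrom
    {U | ∃ (s : List ℚ) (g₀ : G) (q₀ : ℚ), g₀ ∈ G₀ ∧
      U = {f : ↥(HjorthX d G₀) | f.1 s g₀ < (q₀ : ℝ)}}
/-!
Right translation by `g` is an isometry of the right-invariant metric `d`, so it preserves
`L(G,d)`. Conditions (1)–(3) only involve values of `1`-Lipschitz functions and strict
inequalities with a rational slack `ε` that may be perturbed, so by density of `G₀` they
hold at every point of `G`, not just on `G₀`; in (3) the witness may then be moved into any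
`d`-dense set, in particular into `G₀ g`. Translating by `g` turns these facts for `f⃗` into
conditions (1)–(3) for `g · f⃗`.
-/

section

variable {G : Type*} {d : G → G → ℝ} {f : List ℚ → G → ℝ} {S T : Set G}

def MetricDense (d : G → G → ℝ) (S : Set G) : Prop :=
  ∀ x, ∀ r : ℝ, 0 < r → ∃ y ∈ S, d x y < r

theorem Dense.metricDense [TopologicalSpace G]
    (hbasis : ∀ x : G, (𝓝 x).HasBasis (fun ε : ℝ => 0 < ε) (fun ε => {y | d x y < ε}))
    (hS : Dense S) : MetricDense d S :=
  fun x => (mem_closure_iff_nhds_basis (hbasis x)).mp (hS x)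

theorem MetricDense.image_mul_right [Group G] (hinv : ∀ a b k : G, d (a * k) (b * k) = d a b)
    (hS : MetricDense d S) (g : G) : MetricDense d ((· * g) '' S) := by
  intro x r hr
  obtain ⟨y, hy, hxy⟩ := hS (x * g⁻¹) r hr
  refine ⟨y * g, mem_image_of_mem _ hy, ?_⟩
  rwa [← hinv x (y * g) g⁻¹, mul_inv_cancel_right]

theorem comp_mul_right_mem_LGd [Group G] (hinv : ∀ a b k : G, d (a * k) (b * k) = d a b)
    {φ : G → ℝ} (hφ : φ ∈ LGd d) (g : G) : (fun x => φ (x * g)) ∈ LGd d :=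
  ⟨fun x => hφ.1 (x * g), fun a b => (hφ.2 (a * g) (b * g)).trans_eq (hinv a b g)⟩

theorem Cond3.comp_mul_right [Group G] (hinv : ∀ a b k : G, d (a * k) (b * k) = d a b)
    (h : Cond3 d f S T) (g : G) :
    Cond3 d (fun s x => f s (x * g)) ((· * g) ⁻¹' S) ((· * g) ⁻¹' T) := by
  intro s x hx q₀ hq₀ ε hε hfx
  obtain ⟨q₁, q₂, z, m, n, hz, hq₂, hq₂₁, hq₁₀, hxz, hfz⟩ := h s (x * g) hx q₀ hq₀ ε hε hfx
  refine ⟨q₁, q₂, z * g⁻¹, m, n, ?_, hq₂, hq₂₁, hq₁₀, ?_, ?_⟩ <;>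
    simpa only [mem_preimage, inv_mul_cancel_right, ← hinv x (z * g⁻¹) g]

-- The constraints that conditions (1) and (2) impose on `ε`.
def AdmissibleTolerance (q₀ q₁ q₂ ε : ℚ) : Prop :=
  ε ∈ Ioo (0 : ℚ) 1 ∧ 0 < q₀ - ε ∧ q₀ + ε < 1 ∧ 0 < q₁ - ε ∧ q₁ + ε < 1 ∧
    0 < q₂ - ε ∧ q₂ + ε < 1

theorem AdmissibleTolerance.exists_between {q₀ q₁ q₂ ε : ℚ}
    (hε : AdmissibleTolerance q₀ q₁ q₂ ε) {a b : ℝ} (ha : a ≤ ε) (hb : ε < b) :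
    ∃ ε' : ℚ, a < ε' ∧ ε' < b ∧ AdmissibleTolerance q₀ q₁ q₂ ε' := by
  obtain ⟨⟨hε0, -⟩, h₀, h₀', h₁, h₁', h₂, h₂'⟩ := hε
  have hb' : ∀ᶠ ε' : ℚ in 𝓝 ε, (ε' : ℝ) < b :=
    (Rat.continuous_coe_real.tendsto ε).eventually (eventually_lt_nhds hb)
  have hnhds := hb'.and <| (eventually_gt_nhds hε0).and <|
    (eventually_lt_nhds (show ε < q₀ by linarith)).and <|
    (eventually_lt_nhds (show ε < 1 - q₀ by linarith)).and <|
    (eventually_lt_nhds (show ε < q₁ by linarith)).and <|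
    (eventually_lt_nhds (show ε < 1 - q₁ by linarith)).and <|
    (eventually_lt_nhds (show ε < q₂ by linarith)).and
    (eventually_lt_nhds (show ε < 1 - q₂ by linarith))
  obtain ⟨ε', ⟨hε'b, hε'0, c₀, c₀', c₁, c₁', c₂, c₂'⟩, hεε'⟩ :=
    ((hnhds.filter_mono (nhdsWithin_le_nhds (s := Ioi ε))).and self_mem_nhdsWithin).exists
  refine ⟨ε', ha.trans_lt (by exact_mod_cast hεε'), hε'b, ⟨hε'0, ?_⟩, ?_, ?_, ?_, ?_, ?_, ?_⟩ <;>
    linarith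

variable (hf : ∀ s a b, |f s a - f s b| ≤ d a b)
include hf

theorem Cond1.univ_of_metricDense (hS : MetricDense d S) (h : Cond1 f S) : Cond1 f univ := by
  intro s x _ m n q₀ q₁ q₂ ε hq₀ hq₁ hq₂ hε h₀ h₀' h₁ h₁' h₂ h₂'
  by_contra! ⟨ht, hs⟩
  -- Raising `ε` makes `q₁ - ε ≤ f_t x` strict, which leaves room to move `x` into `S`.
  obtain ⟨ε', hεε', hε's, hε'0, c₀, c₀', c₁, c₁', c₂, c₂'⟩ :=
    AdmissibleTolerance.exists_between ⟨hε, h₀, h₀', h₁, h₁', h₂, h₂'⟩ le_rfl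
      (show (ε : ℝ) < f s x - q₀ by linarith)
  obtain ⟨y, hy, hxy⟩ := hS x _ (lt_min (sub_pos.mpr hεε') (by linarith : 0 < f s x - q₀ - ε'))
  have := abs_le.mp (hf (seqT s q₀ q₁ q₂ m n) x y)
  have := abs_le.mp (hf s x y)
  rcases h s y hy m n q₀ q₁ q₂ ε' hq₀ hq₁ hq₂ hε'0 c₀ c₀' c₁ c₁' c₂ c₂' with hy' | hy' <;>
    linarith [min_le_left (ε' - ε : ℝ) (f s x - q₀ - ε'),
      min_le_right (ε' - ε : ℝ) (f s x - q₀ - ε')]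

theorem Cond2.univ_of_metricDense (hS : MetricDense d S) (h : Cond2 f S) : Cond2 f univ := by
  intro s x _ m n q₀ q₁ q₂ ε hq₀ hq₁ hq₂ hε h₀ h₀' h₁ h₁' h₂ h₂'
  set u := seqU s q₀ q₁ q₂ m n
  set t := seqT s q₀ q₁ q₂ m n
  by_contra! ⟨hu, ht⟩
  obtain ⟨ε', hε'u, hε't, hε'0, c₀, c₀', c₁, c₁', c₂, c₂'⟩ :=
    AdmissibleTolerance.exists_between ⟨hε, h₀, h₀', h₁, h₁', h₂, h₂'⟩
      (show f u x - q₂ ≤ ε by linarith) (show (ε : ℝ) < q₁ - f t x by linarith)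
  obtain ⟨y, hy, hxy⟩ :=
    hS x _ (lt_min (by linarith : 0 < q₂ + ε' - f u x) (by linarith : 0 < q₁ - ε' - f t x))
  have := abs_le.mp (hf u x y)
  have := abs_le.mp (hf t x y)
  rcases h s y hy m n q₀ q₁ q₂ ε' hq₀ hq₁ hq₂ hε'0 c₀ c₀' c₁ c₁' c₂ c₂' with hy' | hy' <;>
    linarith [min_le_left (q₂ + ε' - f u x : ℝ) (q₁ - ε' - f t x),
      min_le_right (q₂ + ε' - f u x : ℝ) (q₁ - ε' - f t x)]

variable (htri : ∀ a b c, d a c ≤ d a b + d b c)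
include htri

theorem Cond3.univ_of_metricDense (hS : MetricDense d S) (h : Cond3 d f S T) :
    Cond3 d f univ T := by
  intro s x _ q₀ hq₀ ε hε hx
  have hε2 : ((ε / 2 : ℚ) : ℝ) = ε / 2 := by push_cast; ring
  obtain ⟨y, hy, hxy⟩ := hS x _ (lt_min (half_pos (Rat.cast_pos.mpr hε.1)) (sub_pos.mpr hx))
  have hxy₁ := min_le_left (ε / 2 : ℝ) (q₀ - f s x)
  have hxy₂ := min_le_right (ε / 2 : ℝ) (q₀ - f s x)
  have hy' : f s y < q₀ := by linarith [abs_le.mp (hf s x y)]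
  obtain ⟨q₁, q₂, z, m, n, hz, hq₂, hq₂₁, hq₁₀, hyz, hfz⟩ :=
    h s y hy q₀ hq₀ (ε / 2) ⟨by linarith [hε.1], by linarith [hε.2]⟩ hy'
  exact ⟨q₁, q₂, z, m, n, hz, hq₂, hq₂₁, hq₁₀, by linarith [htri x y z], hfz⟩

theorem Cond3.of_metricDense_witness {T' : Set G} (hT' : MetricDense d T')
    (h : Cond3 d f S T) : Cond3 d f S T' := by
  intro s x hx q₀ hq₀ ε hε hfx
  obtain ⟨q₁, q₂, z, m, n, -, hq₂, hq₂₁, hq₁₀, hxz, hfz⟩ := h s x hx q₀ hq₀ ε hε hfx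
  set u := seqU s q₀ q₁ q₂ m n
  obtain ⟨w, hw, hzw⟩ := hT' z _ (lt_min (sub_pos.mpr hxz) (sub_pos.mpr hfz))
  have := min_le_left (ε - d x z) (q₂ - f u z)
  have := min_le_right (ε - d x z) (q₂ - f u z)
  refine ⟨q₁, q₂, w, m, n, hw, hq₂, hq₂₁, hq₁₀, by linarith [htri x z w], ?_⟩
  linarith [abs_le.mp (hf u z w)]

end

theorem hjorthX_invariant_general {G : Type*} [Group G] [TopologicalSpace G]
    (d : G → G → ℝ) (hd : IsRightInvariantCompatibleMetric d)
    (G₀ : Subgroup G) (hG₀dense : Dense (G₀ : Set G))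
    (f : List ℚ → G → ℝ) (hf : f ∈ HjorthX d G₀) (g : G) :
    (fun s g₀ => f s (g₀ * g)) ∈ HjorthX d G₀ := by
  obtain ⟨-, -, htri, hinv, -, hbasis⟩ := hd
  obtain ⟨hL, h₁, h₂, h₃⟩ := hf
  have hlip : ∀ s a b, |f s a - f s b| ≤ d a b := fun s => (hL s).2
  have hG₀ : MetricDense d (G₀ : Set G) := hG₀dense.metricDense hbasis
  have h₃' := ((h₃.univ_of_metricDense hlip htri hG₀).of_metricDense_witness hlip htri
    (hG₀.image_mul_right hinv g)).comp_mul_right hinv g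
  rw [preimage_univ, preimage_image_eq _ (mul_left_injective g)] at h₃'
  exact ⟨fun s => comp_mul_right_mem_LGd hinv (hL s) g,
    fun s x _ => h₁.univ_of_metricDense hlip hG₀ s (x * g) trivial,
    fun s x _ => h₂.univ_of_metricDense hlip hG₀ s (x * g) trivial,
    fun s x _ => h₃' s x trivial⟩

/-- The set `X` is invariant under the `G`-action on `L(G,d)^{ℚ^{<ℕ}}` given by
`(g · f⃗)_s(g₀) = f_s(g₀ g)`: if `f⃗ ∈ X` and `g ∈ G`, then `g · f⃗ ∈ X`. -/
theorem hjorthX_invariant {G : Type*} [Group G] [TopologicalSpace G]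
    [IsTopologicalGroup G] [PolishSpace G]
    (d : G → G → ℝ) (hd : IsRightInvariantCompatibleMetric d)
    (G₀ : Subgroup G) (hG₀count : (G₀ : Set G).Countable) (hG₀dense : Dense (G₀ : Set G))
    (f : List ℚ → G → ℝ) (hf : f ∈ HjorthX d G₀) (g : G) :
    (fun s g₀ => f s (g₀ * g)) ∈ HjorthX d G₀ :=
  hjorthX_invariant_general d hd G₀ hG₀dense f hf g
end

section
/- If f⃗ ∈ X, then condition (3) holds with g₀ ranging over all of G: for all s ∈ ℚ^{<ℕ}, g₀ ∈ G, q₀,ε ∈ ℚ∩(0,1), if f_s(g₀) < q₀ then there are q₁,q₂ ∈ ℚ with 0 < q₂ < q₁ < q₀, g₁ ∈ G₀ with d(g₀,g₁) < ε, and n,m ∈ ℕ such that f_u(g₁) < q₂ where u = sq₀q₁q₂1mn. -/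
open Set Topology

/-! Move `g₀` to a point `g₀'` of `G₀` at a rational distance `δ < ε` small enough that the
`1`-Lipschitz function `f_s` is still below `q₀` at `g₀'`; condition (3) at `g₀'` with
tolerance `ε - δ` yields a witness, which is `ε`-close to `g₀` by the triangle inequality. -/

theorem LGd.le_add {G : Type*} {d : G → G → ℝ} {φ : G → ℝ} (hφ : φ ∈ LGd d) (g h : G) :
    φ h ≤ φ g + d g h := by
  linarith [(abs_sub_le_iff.mp (hφ.2 g h)).2]

theorem IsRightInvariantCompatibleMetric.exists_mem_lt_of_dense {G : Type*} [Group G]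
    [TopologicalSpace G] {d : G → G → ℝ} (hd : IsRightInvariantCompatibleMetric d)
    {S : Set G} (hS : Dense S) (x : G) {δ : ℝ} (hδ : 0 < δ) : ∃ y ∈ S, d x y < δ :=
  hS.inter_nhds_nonempty ((hd.2.2.2.2.2 x).mem_of_mem hδ)

theorem Cond3.of_approximable {G : Type*} {d : G → G → ℝ} {f : List ℚ → G → ℝ}
    {S S' T : Set G} (h3 : Cond3 d f S T) (htri : ∀ g h k, d g k ≤ d g h + d h k)
    (hL : ∀ s, f s ∈ LGd d) (happrox : ∀ x ∈ S', ∀ δ : ℝ, 0 < δ → ∃ y ∈ S, d x y < δ) :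
    Cond3 d f S' T := by
  intro s x hx q₀ hq₀ ε hε hfx
  obtain ⟨δ, hδ0, hδ⟩ : ∃ δ : ℚ, (0 : ℝ) < δ ∧ (δ : ℝ) < min (ε : ℝ) (q₀ - f s x) :=
    exists_rat_btwn (lt_min (by exact_mod_cast hε.1) (sub_pos.mpr hfx))
  have hδpos : 0 < δ := Rat.cast_pos.mp hδ0
  have hδε : δ < ε := by exact_mod_cast hδ.trans_le (min_le_left _ _)
  obtain ⟨y, hy, hxy⟩ := happrox x hx δ hδ0
  have hfy : f s y < q₀ := by
    linarith [LGd.le_add (hL s) x y, hδ.trans_le (min_le_right _ _)]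
  obtain ⟨q₁, q₂, g₁, m, n, hg₁, hq₂, hq₂₁, hq₁₀, hyg₁, hu⟩ :=
    h3 s y hy q₀ hq₀ (ε - δ) ⟨sub_pos.mpr hδε, by linarith [hε.2]⟩ hfy
  refine ⟨q₁, q₂, g₁, m, n, hg₁, hq₂, hq₂₁, hq₁₀, ?_, hu⟩
  push_cast at hyg₁
  linarith [htri x y g₁]

theorem hjorthX_cond3_univ_general {G : Type*} [Group G] [TopologicalSpace G]
    (d : G → G → ℝ) (hd : IsRightInvariantCompatibleMetric d)
    (G₀ : Subgroup G) (hG₀dense : Dense (G₀ : Set G))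
    (f : List ℚ → G → ℝ) (hf : f ∈ HjorthX d G₀) :
    Cond3 d f (Set.univ : Set G) (G₀ : Set G) := by
  obtain ⟨hL, -, -, h3⟩ := hf
  exact h3.of_approximable hd.2.2.1 hL fun x _ _ hδ => hd.exists_mem_lt_of_dense hG₀dense x hδ

/-- If `f⃗ ∈ X`, then condition (3) holds with `g₀` ranging over all of `G`
(with the witness `g₁` still in `G₀`). -/
theorem hjorthX_cond3_univ {G : Type*} [Group G] [TopologicalSpace G]
    [IsTopologicalGroup G] [PolishSpace G]
    (d : G → G → ℝ) (hd : IsRightInvariantCompatibleMetric d)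
    (G₀ : Subgroup G) (hG₀count : (G₀ : Set G).Countable) (hG₀dense : Dense (G₀ : Set G))
    (f : List ℚ → G → ℝ) (hf : f ∈ HjorthX d G₀) :
    Cond3 d f (Set.univ : Set G) (G₀ : Set G) :=
  hjorthX_cond3_univ_general d hd G₀ hG₀dense f hf
end

section
/- The topological space (X, τ) is Hausdorff. -/
open Set Topology

/-!
If `x ≠ y` in `X`, some coordinate differs; coordinates are `d`-Lipschitz, hence continuous,
so by density they already differ at some `(s, g₀)` with `g₀ ∈ G₀`, say
`x_s(g₀) < q₀ < y_s(g₀)`. Condition (3) for `x` gives `g₁ ∈ G₀` near `g₀` and `q₂ < q₁ < q₀`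
with `x_u(g₁) < q₂`; condition (1) for `y` (as `y_s(g₁)` is still above `q₀ + ε`) gives
`y_t(g₁) < q₁ - ε`; and condition (2) says that no point satisfies both `f_u(g₁) < q₂` and
`f_t(g₁) < q₁ - ε`.
-/

theorem continuous_of_mem_LGd {G : Type*} [TopologicalSpace G] {d : G → G → ℝ}
    (hd : ∀ x : G, (𝓝 x).HasBasis (fun ε : ℝ => 0 < ε) (fun ε => {y | d x y < ε}))
    {f : G → ℝ} (hf : f ∈ LGd d) : Continuous f := by
  refine continuous_iff_continuousAt.2 fun x => ?_
  refine ((hd x).tendsto_iff Metric.nhds_basis_ball).2 fun ε hε => ⟨ε, hε, fun y hy => ?_⟩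
  rw [Metric.mem_ball, Real.dist_eq, abs_sub_comm]
  exact (hf.2 x y).trans_lt hy

section Conditions

variable {G : Type*} {f : List ℚ → G → ℝ} {S : Set G} {g : G} {q₀ q₁ q₂ ε : ℚ}

theorem Cond1.lt_sub_of_add_lt (h : Cond1 f S) (hg : g ∈ S) (s : List ℚ) (m n : ℕ)
    (hε : 0 < ε) (hεq₂ : ε < q₂) (hq₂₁ : q₂ < q₁) (hq₁₀ : q₁ < q₀) (hq₀ : q₀ + ε < 1)
    (hfs : (q₀ : ℝ) + ε < f s g) : f (seqT s q₀ q₁ q₂ m n) g < (q₁ : ℝ) - ε := by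
  refine (h s g hg m n q₀ q₁ q₂ ε ?_ ?_ ?_ ?_ ?_ ?_ ?_ ?_ ?_ ?_).resolve_right hfs.not_ge
  all_goals first | exact ⟨by linarith, by linarith⟩ | linarith

theorem Cond2.sub_le_of_lt_add (h : Cond2 f S) (hg : g ∈ S) (s : List ℚ) (m n : ℕ)
    (hε : 0 < ε) (hεq₂ : ε < q₂) (hq₂₁ : q₂ < q₁) (hq₁₀ : q₁ < q₀) (hq₀ : q₀ + ε < 1)
    (hfu : f (seqU s q₀ q₁ q₂ m n) g < (q₂ : ℝ) + ε) :
    (q₁ : ℝ) - ε ≤ f (seqT s q₀ q₁ q₂ m n) g := by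
  refine (h s g hg m n q₀ q₁ q₂ ε ?_ ?_ ?_ ?_ ?_ ?_ ?_ ?_ ?_ ?_).resolve_left hfu.not_ge
  all_goals first | exact ⟨by linarith, by linarith⟩ | linarith

end Conditions

namespace HjorthX

variable {G : Type*} [Group G] {d : G → G → ℝ} {G₀ : Subgroup G}

theorem isOpen_setOf_lt {g : G} (hg : g ∈ G₀) (s : List ℚ) (q : ℚ) :
    IsOpen[hjorthTau d G₀] {f : HjorthX d G₀ | f.1 s g < q} :=
  TopologicalSpace.isOpen_generateFrom_of_mem ⟨s, g, q, hg, rfl⟩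

theorem ext_of_eqOn [TopologicalSpace G]
    (hd : ∀ x : G, (𝓝 x).HasBasis (fun ε : ℝ => 0 < ε) (fun ε => {y | d x y < ε}))
    (hG₀ : Dense (G₀ : Set G)) {x y : HjorthX d G₀}
    (h : ∀ s, EqOn (x.1 s) (y.1 s) G₀) : x = y :=
  Subtype.ext <| funext fun s =>
    Continuous.ext_on hG₀ (continuous_of_mem_LGd hd (x.2.1 s))
      (continuous_of_mem_LGd hd (y.2.1 s)) (h s)

theorem exists_disjoint_isOpen_of_lt {x y : HjorthX d G₀} {s : List ℚ} {g₀ : G}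
    (hg₀ : g₀ ∈ G₀) (hlt : x.1 s g₀ < y.1 s g₀) :
    ∃ U V : Set (HjorthX d G₀), IsOpen[hjorthTau d G₀] U ∧ IsOpen[hjorthTau d G₀] V ∧
      x ∈ U ∧ y ∈ V ∧ Disjoint U V := by
  obtain ⟨hxL, -, -, hx3⟩ := x.2
  obtain ⟨hyL, hy1, -, -⟩ := y.2
  obtain ⟨q₀, hxq₀, hq₀y⟩ := exists_rat_btwn hlt
  have hq₀ : q₀ ∈ Ioo (0 : ℚ) 1 :=
    ⟨by exact_mod_cast ((hxL s).1 g₀).1.trans_lt hxq₀,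
      by exact_mod_cast hq₀y.trans_le ((hyL s).1 g₀).2⟩
  obtain ⟨η, hη, hηgap⟩ :=
    exists_rat_btwn (lt_min (half_pos (sub_pos.2 hq₀y)) one_pos)
  rw [lt_min_iff] at hηgap
  have hη : (0 : ℚ) < η := by exact_mod_cast hη
  obtain ⟨q₁, q₂, g₁, m, n, hg₁, hq₂, hq₂₁, hq₁₀, hdist, hxu⟩ :=
    hx3 s g₀ hg₀ q₀ hq₀ η ⟨hη, by exact_mod_cast hηgap.2⟩ hxq₀
  obtain ⟨ε, hε, hεmin⟩ := exists_between (lt_min hη (lt_min hq₂ (sub_pos.2 hq₀.2)))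
  simp only [lt_min_iff] at hεmin
  obtain ⟨hεη, hεq₂, hεq₀⟩ := hεmin
  -- `y_s` moves by less than `η` from `g₀` to `g₁`, and `q₀ + 2η ≤ y_s(g₀)`
  have hyg₁ : (q₀ : ℝ) + ε < y.1 s g₁ := by
    have hLip := (abs_sub_le_iff.1 ((hyL s).2 g₀ g₁)).1
    have : (ε : ℝ) < η := by exact_mod_cast hεη
    linarith [hηgap.1]
  refine ⟨{f | f.1 (seqU s q₀ q₁ q₂ m n) g₁ < q₂},
    {f | f.1 (seqT s q₀ q₁ q₂ m n) g₁ < ((q₁ - ε : ℚ) : ℝ)},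
    isOpen_setOf_lt hg₁ _ _, isOpen_setOf_lt hg₁ _ _, hxu, ?_, ?_⟩
  · simpa using hy1.lt_sub_of_add_lt hg₁ s m n hε hεq₂ hq₂₁ hq₁₀ (by linarith) hyg₁
  · refine Set.disjoint_left.2 fun f (hfu : f.1 _ g₁ < q₂)
      (hft : f.1 _ g₁ < ((q₁ - ε : ℚ) : ℝ)) => ?_
    have hε' : (0 : ℝ) < ε := by exact_mod_cast hε
    have := f.2.2.2.1.sub_le_of_lt_add hg₁ s m n hε hεq₂ hq₂₁ hq₁₀ (by linarith)
      (by linarith)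
    rw [Rat.cast_sub] at hft
    linarith

end HjorthX

theorem hjorthTau_t2Space_general {G : Type*} [Group G] [TopologicalSpace G]
    (d : G → G → ℝ) (hd : IsRightInvariantCompatibleMetric d)
    (G₀ : Subgroup G) (hG₀dense : Dense (G₀ : Set G)) :
    @T2Space ↥(HjorthX d G₀) (hjorthTau d G₀) := by
  let := hjorthTau d G₀
  refine ⟨fun x y hxy => ?_⟩
  obtain ⟨s, g₀, hg₀, hne⟩ : ∃ s, ∃ g₀ ∈ G₀, x.1 s g₀ ≠ y.1 s g₀ := by
    by_contra! h
    exact hxy (HjorthX.ext_of_eqOn hd.2.2.2.2.2 hG₀dense h)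
  rcases hne.lt_or_gt with hlt | hlt
  · exact HjorthX.exists_disjoint_isOpen_of_lt hg₀ hlt
  · obtain ⟨U, V, hU, hV, hyU, hxV, hUV⟩ := HjorthX.exists_disjoint_isOpen_of_lt hg₀ hlt
    exact ⟨V, U, hV, hU, hxV, hyU, hUV.symm⟩

/-- The topological space `(X, τ)` is Hausdorff. -/
theorem hjorthTau_t2Space {G : Type*} [Group G] [TopologicalSpace G]
    [IsTopologicalGroup G] [PolishSpace G]
    (d : G → G → ℝ) (hd : IsRightInvariantCompatibleMetric d)
    (G₀ : Subgroup G) (hG₀count : (G₀ : Set G).Countable) (hG₀dense : Dense (G₀ : Set G)) :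
    @T2Space ↥(HjorthX d G₀) (hjorthTau d G₀) :=
  hjorthTau_t2Space_general d hd G₀ hG₀dense
end

section
/- The topological space (X, τ) is regular: for every point f⃗ ∈ X and every open set 𝒪 containing f⃗ there is an open set U with f⃗ ∈ U and the closure of U contained in 𝒪. -/
open Set Topology

/-! Regularity can be checked on the subbasis. Given `f_s(g₀) < q₀`, pick a rational
`q₀'` in between and apply condition (3) at `q₀'` to get a subbasic neighbourhood
`U = {f_u(g₁) < q₂}` with `u = s q₀' q₁ q₂ 1 m n` and `g₁` close to `g₀`. By condition (2) every
point of `U` satisfies `f_t(g₁) ≥ q₁ - δ`, a closed condition, so it holds on the closure of `U`;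
there condition (1) yields `f_s(g₁) ≤ q₀' + δ`, and the Lipschitz bound moves this back to
`f_s(g₀) < q₀`. -/

open Filter

theorem disjoint_nhdsSet_compl_nhds_of_closure_subset {X : Type*} [TopologicalSpace X]
    {t U : Set X} {a : X} (hU : IsOpen U) (ha : a ∈ U) (hUt : closure U ⊆ t) :
    Disjoint (𝓝ˢ tᶜ) (𝓝 a) :=
  disjoint_of_disjoint_of_mem (disjoint_compl_left.mono_right subset_closure)
    (isClosed_closure.isOpen_compl.mem_nhdsSet.2 (compl_subset_compl.2 hUt)) (hU.mem_nhds ha)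

theorem regularSpace_generateFrom_of_closure_subset {X : Type*} [t : TopologicalSpace X]
    {S : Set (Set X)} (hS : t = TopologicalSpace.generateFrom S)
    (h : ∀ V ∈ S, ∀ a ∈ V, ∃ U, IsOpen U ∧ a ∈ U ∧ closure U ⊆ V) : RegularSpace X :=
  (regularSpace_generateFrom hS).2 fun V hV a ha =>
    let ⟨_, hU, haU, hUV⟩ := h V hV a ha
    disjoint_nhdsSet_compl_nhds_of_closure_subset hU haU hUV

namespace LGd

variable {G : Type*} {d : G → G → ℝ} {f : G → ℝ}

theorem nonneg (hf : f ∈ LGd d) (g : G) : 0 ≤ f g := (hf.1 g).1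

theorem le_one (hf : f ∈ LGd d) (g : G) : f g ≤ 1 := (hf.1 g).2

theorem le_add_dist (hf : f ∈ LGd d) (g g' : G) : f g ≤ f g' + d g g' := by
  linarith [(abs_sub_le_iff.1 (hf.2 g g')).1]

end LGd

/-- The side conditions on the rationals under which conditions (1) and (2) apply. -/
structure AdmissibleParams (q₀ q₁ q₂ ε : ℚ) : Prop where
  q₀_mem : q₀ ∈ Ioo (0 : ℚ) 1
  q₁_mem : q₁ ∈ Ioo (0 : ℚ) 1
  q₂_mem : q₂ ∈ Ioo (0 : ℚ) 1
  ε_mem : ε ∈ Ioo (0 : ℚ) 1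
  sub₀ : 0 < q₀ - ε
  add₀ : q₀ + ε < 1
  sub₁ : 0 < q₁ - ε
  add₁ : q₁ + ε < 1
  sub₂ : 0 < q₂ - ε
  add₂ : q₂ + ε < 1

theorem exists_admissibleParams_le {q₀ q₁ q₂ ε : ℚ} (h₂ : 0 < q₂) (h₂₁ : q₂ < q₁)
    (h₁₀ : q₁ < q₀) (h₀ : q₀ < 1) (hε : 0 < ε) :
    ∃ δ ≤ ε, AdmissibleParams q₀ q₁ q₂ δ := by
  set δ := min ε (min (q₂ / 2) ((1 - q₀) / 2))
  have hδε : δ ≤ ε := min_le_left _ _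
  have hδq₂ : δ ≤ q₂ / 2 := (min_le_right _ _).trans (min_le_left _ _)
  have hδq₀ : δ ≤ (1 - q₀) / 2 := (min_le_right _ _).trans (min_le_right _ _)
  have hδ : 0 < δ := lt_min hε (lt_min (by linarith) (by linarith))
  exact ⟨δ, hδε, ⟨by linarith, by linarith⟩, ⟨by linarith, by linarith⟩,
    ⟨by linarith, by linarith⟩, ⟨hδ, by linarith⟩, by linarith, by linarith, by linarith,
    by linarith, by linarith, by linarith⟩

section Conditions

variable {G : Type*} {f : List ℚ → G → ℝ} {S : Set G} {s : List ℚ} {g : G}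
  {q₀ q₁ q₂ ε : ℚ} {m n : ℕ}

theorem Cond1.le_of_le (h : Cond1 f S) (hg : g ∈ S) (hp : AdmissibleParams q₀ q₁ q₂ ε)
    (ht : (q₁ : ℝ) - ε ≤ f (seqT s q₀ q₁ q₂ m n) g) : f s g ≤ q₀ + ε :=
  (h s g hg m n q₀ q₁ q₂ ε hp.q₀_mem hp.q₁_mem hp.q₂_mem hp.ε_mem hp.sub₀ hp.add₀ hp.sub₁
    hp.add₁ hp.sub₂ hp.add₂).resolve_left ht.not_gt

theorem Cond2.le_of_lt (h : Cond2 f S) (hg : g ∈ S) (hp : AdmissibleParams q₀ q₁ q₂ ε)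
    (hu : f (seqU s q₀ q₁ q₂ m n) g < q₂) : (q₁ : ℝ) - ε ≤ f (seqT s q₀ q₁ q₂ m n) g := by
  have hε : (0 : ℝ) < ε := by exact_mod_cast hp.ε_mem.1
  exact (h s g hg m n q₀ q₁ q₂ ε hp.q₀_mem hp.q₁_mem hp.q₂_mem hp.ε_mem hp.sub₀ hp.add₀
    hp.sub₁ hp.add₁ hp.sub₂ hp.add₂).resolve_left (by linarith)

end Conditions

namespace hjorthTau

variable {G : Type*} [Group G] {d : G → G → ℝ} {G₀ : Subgroup G} {s : List ℚ} {g : G}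

theorem isOpen_setOf_lt (hg : g ∈ G₀) (q : ℚ) :
    IsOpen[hjorthTau d G₀] {f | f.1 s g < q} :=
  TopologicalSpace.isOpen_generateFrom_of_mem ⟨s, g, q, hg, rfl⟩

theorem isClosed_setOf_le (hg : g ∈ G₀) (q : ℚ) :
    IsClosed[hjorthTau d G₀] {f | q ≤ f.1 s g} := by
  let := hjorthTau d G₀
  simpa only [compl_ofPred, not_lt] using (isOpen_setOf_lt hg q).isClosed_compl

theorem closure_setOf_seqU_lt_subset {q₀ q₁ q₂ ε : ℚ} {m n : ℕ} (hg : g ∈ G₀)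
    (hp : AdmissibleParams q₀ q₁ q₂ ε) :
    closure[hjorthTau d G₀] {f | f.1 (seqU s q₀ q₁ q₂ m n) g < q₂} ⊆
      {f | f.1 s g ≤ q₀ + ε} := by
  let := hjorthTau d G₀
  have hclosed : IsClosed {f : HjorthX d G₀ | (q₁ : ℝ) - ε ≤ f.1 (seqT s q₀ q₁ q₂ m n) g} := by
    simpa only [Rat.cast_sub] using isClosed_setOf_le (d := d) (s := seqT s q₀ q₁ q₂ m n) hg
      (q₁ - ε)
  refine (closure_minimal (fun f hf => f.2.2.2.1.le_of_lt hg hp hf) hclosed).trans ?_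
  exact fun f hf => f.2.2.1.le_of_le hg hp hf

theorem exists_isOpen_closure_subset_setOf_lt (x : HjorthX d G₀) (hg : g ∈ G₀) {q : ℚ}
    (hx : x.1 s g < q) :
    ∃ U, IsOpen[hjorthTau d G₀] U ∧ x ∈ U ∧
      closure[hjorthTau d G₀] U ⊆ {f | f.1 s g < q} := by
  let := hjorthTau d G₀
  rcases lt_or_ge 1 q with hq | hq
  · refine ⟨univ, isOpen_univ, trivial, fun f _ => ?_⟩
    exact (LGd.le_one (f.2.1 s) g).trans_lt (by exact_mod_cast hq)
  obtain ⟨q', hxq', hq'q⟩ := exists_rat_btwn hx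
  have hq' : 0 < q' := by exact_mod_cast (LGd.nonneg (x.2.1 s) g).trans_lt hxq'
  obtain ⟨ε, hε⟩ : ∃ ε : ℚ, ε = (q - q') / 2 := ⟨_, rfl⟩
  have hε₀ : 0 < ε := by rw [hε]; exact_mod_cast half_pos (sub_pos.2 hq'q)
  obtain ⟨q₁, q₂, g₁, m, n, hg₁, h₂, h₂₁, h₁₀, hdist, hxu⟩ :=
    x.2.2.2.2 s g hg q' ⟨hq', by linarith⟩ ε ⟨hε₀, by linarith⟩ hxq'
  obtain ⟨δ, hδε, hp⟩ := exists_admissibleParams_le (ε := ε) h₂ h₂₁ h₁₀ (by linarith) hε₀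
  refine ⟨_, isOpen_setOf_lt hg₁ q₂, hxu, fun f hf => ?_⟩
  have hf₁ : f.1 s g₁ ≤ q' + δ := closure_setOf_seqU_lt_subset hg₁ hp hf
  have hδε : (δ : ℝ) ≤ ε := by exact_mod_cast hδε
  have hεR : (ε : ℝ) = (q - q') / 2 := by rw [hε]; push_cast; ring
  show f.1 s g < q
  linarith [LGd.le_add_dist (f.2.1 s) g g₁]

end hjorthTau

theorem hjorthTau_regular_general {G : Type*} [Group G] (d : G → G → ℝ) (G₀ : Subgroup G) :
    ∀ (x : ↥(HjorthX d G₀)) (O : Set ↥(HjorthX d G₀)),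
      (hjorthTau d G₀).IsOpen O → x ∈ O →
      ∃ U : Set ↥(HjorthX d G₀), (hjorthTau d G₀).IsOpen U ∧ x ∈ U ∧
        @closure _ (hjorthTau d G₀) U ⊆ O := by
  let := hjorthTau d G₀
  have : RegularSpace (HjorthX d G₀) :=
    regularSpace_generateFrom_of_closure_subset rfl fun _ ⟨_, _, _, hg, hV⟩ x hx => by
      subst hV; exact hjorthTau.exists_isOpen_closure_subset_setOf_lt x hg hx
  intro x O hO hxO
  obtain ⟨U, ⟨hxU, hU⟩, hUO⟩ := (hasBasis_opens_closure x).mem_iff.1 (IsOpen.mem_nhds hO hxO)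
  exact ⟨U, hU, hxU, hUO⟩

/-- The topological space `(X, τ)` is regular: every point of every open set
`𝒪` has an open neighbourhood `U` whose closure is contained in `𝒪`. -/
theorem hjorthTau_regular {G : Type*} [Group G] [TopologicalSpace G]
    [IsTopologicalGroup G] [PolishSpace G]
    (d : G → G → ℝ) (hd : IsRightInvariantCompatibleMetric d)
    (G₀ : Subgroup G) (hG₀count : (G₀ : Set G).Countable) (hG₀dense : Dense (G₀ : Set G)) :
    ∀ (x : ↥(HjorthX d G₀)) (O : Set ↥(HjorthX d G₀)),
      (hjorthTau d G₀).IsOpen O → x ∈ O →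
      ∃ U : Set ↥(HjorthX d G₀), (hjorthTau d G₀).IsOpen U ∧ x ∈ U ∧
        @closure _ (hjorthTau d G₀) U ⊆ O :=
  hjorthTau_regular_general d G₀
end

section
/- Let O ⊆ Y be open, let q₀, q₁, ε be rationals with 0 < q₁ − ε and 0 < q₀ < 1, let W = ⋃{g·O : g ∈ G, d(1_G, g⁻¹) < q₀}, and let C ⊆ Y be a closed set with C ⊆ W. Fix y ∈ Y and g₀ ∈ G. If f_{Y∖C}^y(g₀) ≥ q₁ − ε, then f_O^y(g₀) < q₀. -/
open Set Topology Pointwise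

open Classical in
/-- For `A ⊆ Y` and `y ∈ Y`, the function
`f_A^y(g₀) = inf {d(1, g) : g • (g₀ • y) ∈ A}` if this set is nonempty, and `1`
otherwise. -/
noncomputable def fFn {G Y : Type*} [Group G] [MulAction G Y]
    (d : G → G → ℝ) (A : Set Y) (y : Y) (g₀ : G) : ℝ :=
  if ({g : G | g • (g₀ • y) ∈ A}).Nonempty then
    sInf ((fun g => d 1 g) '' {g : G | g • (g₀ • y) ∈ A})
  else 1

/-! If `g₀ • y ∉ C`, then `g = 1` shows `f_{Y∖C}^y(g₀) ≤ d(1, 1) = 0 < q₁ - ε`; hence `g₀ • y ∈ C ⊆ W`,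
and a witness `g₀ • y ∈ g • O` gives `f_O^y(g₀) ≤ d(1, g⁻¹) < q₀`. -/

theorem IsRightInvariantCompatibleMetric.nonneg {G : Type*} [Group G] [TopologicalSpace G]
    {d : G → G → ℝ} (hd : IsRightInvariantCompatibleMetric d) (a b : G) : 0 ≤ d a b := by
  obtain ⟨hsymm, heq, htri, -⟩ := hd
  have := htri a b a
  rw [(heq a a).2 rfl, hsymm b a] at this
  linarith

theorem fFn_le_of_smul_mem {G Y : Type*} [Group G] [MulAction G Y] {d : G → G → ℝ}
    (hd : ∀ g, 0 ≤ d 1 g) {A : Set Y} {y : Y} {g₀ g : G} (hg : g • (g₀ • y) ∈ A) :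
    fFn d A y g₀ ≤ d 1 g := by
  rw [fFn, if_pos ⟨g, hg⟩]
  exact csInf_le ⟨0, by rintro _ ⟨g', -, rfl⟩; exact hd g'⟩ ⟨g, hg, rfl⟩

theorem fFn_lt_of_compl_ge_general {G Y : Type*} [Group G] [TopologicalSpace G]
    (d : G → G → ℝ) (hd : IsRightInvariantCompatibleMetric d)
    [MulAction G Y]
    (O : Set Y) (q₀ q₁ ε : ℚ)
    (hq₁ε : 0 < q₁ - ε)
    (C : Set Y)
    (hCW : C ⊆ {z : Y | ∃ g : G, d 1 g⁻¹ < (q₀ : ℝ) ∧ z ∈ g • O})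
    (y : Y) (g₀ : G)
    (h : (q₁ : ℝ) - (ε : ℝ) ≤ fFn d Cᶜ y g₀) :
    fFn d O y g₀ < (q₀ : ℝ) := by
  have hnn : ∀ g, 0 ≤ d 1 g := hd.nonneg 1
  have hmem : g₀ • y ∈ C := by
    by_contra hnot
    have hle : fFn d Cᶜ y g₀ ≤ d 1 1 := fFn_le_of_smul_mem hnn (by simpa using hnot)
    rw [(hd.2.1 1 1).2 rfl] at hle
    have : (0 : ℝ) < q₁ - ε := by exact_mod_cast hq₁ε
    linarith
  obtain ⟨g, hg, hgO⟩ := hCW hmem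
  exact (fFn_le_of_smul_mem hnn (mem_smul_set_iff_inv_smul_mem.mp hgO)).trans_lt hg

/-- Let `O ⊆ Y` be open, `q₀ q₁ ε` rationals with `0 < q₁ - ε` and `0 < q₀ < 1`,
let `W = ⋃ {g • O : d(1, g⁻¹) < q₀}`, and let `C ⊆ W` be closed.  If
`f_{Y∖C}^y(g₀) ≥ q₁ - ε` then `f_O^y(g₀) < q₀`. -/
theorem fFn_lt_of_compl_ge {G Y : Type*} [Group G] [TopologicalSpace G]
    [IsTopologicalGroup G] [PolishSpace G]
    (d : G → G → ℝ) (hd : IsRightInvariantCompatibleMetric d)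
    [TopologicalSpace Y] [PolishSpace Y] [MulAction G Y] [ContinuousSMul G Y]
    (O : Set Y) (hO : IsOpen O) (q₀ q₁ ε : ℚ)
    (hq₁ε : 0 < q₁ - ε) (hq₀pos : 0 < q₀) (hq₀lt : q₀ < 1)
    (C : Set Y) (hC : IsClosed C)
    (hCW : C ⊆ {z : Y | ∃ g : G, d 1 g⁻¹ < (q₀ : ℝ) ∧ z ∈ g • O})
    (y : Y) (g₀ : G)
    (h : (q₁ : ℝ) - (ε : ℝ) ≤ fFn d Cᶜ y g₀) :
    fFn d O y g₀ < (q₀ : ℝ) :=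
  fFn_lt_of_compl_ge_general d hd O q₀ q₁ ε hq₁ε C hCW y g₀ h
end

section
/- Let O ⊆ Y be open, y ∈ Y, g₀ ∈ G, and q₀ ∈ ℚ∩(0,1) with f_O^y(g₀) < q₀. Then there exist open sets O_n, O_m ⊆ Y and rationals q₁, q₂ with 0 < q₂ < q₁ < q₀ such that: g₀·y ∈ O_n; the closure of O_m is contained in W = ⋃{g·O : g ∈ G, d(1_G, g⁻¹) < q₀}; and for all z ∈ Y and g, h ∈ G, if d(1_G, g) < q₁ + q₂ and g·z ∈ O_n and d(1_G, h) < q₁, then h·z ∈ O_m. -/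
open Set Topology Pointwise

/-! A witness `g` with `g • g₀ • y ∈ O` and `d 1 g < q₀` puts `g₀ • y` in the open set `W`;
by regularity of `Y` some open `Oₘ ∋ g₀ • y` has closure inside `W`, and continuity of the action
at `(1, g₀ • y)` gives `ε > 0` and an open `Oₙ ∋ g₀ • y` with `k • Oₙ ⊆ Oₘ` whenever `d 1 k < ε`.
Take `q₁ = r`, `q₂ = r / 2` for a rational `r < min q₀ (ε / 3)`: then `h • z = (h * g⁻¹) • (g • z)`
and `d 1 (h * g⁻¹) ≤ d 1 g + d 1 h < 5r/2 < ε`, by right invariance and the triangle inequality. -/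

namespace IsRightInvariantCompatibleMetric

variable {G : Type*} [Group G] [TopologicalSpace G] {d : G → G → ℝ}

theorem hasBasis_nhds (hd : IsRightInvariantCompatibleMetric d) (x : G) :
    (𝓝 x).HasBasis (fun ε : ℝ => 0 < ε) fun ε => {y | d x y < ε} :=
  hd.2.2.2.2.2 x

theorem nonneg_s14 (hd : IsRightInvariantCompatibleMetric d) (g h : G) : 0 ≤ d g h := by
  obtain ⟨hsymm, hzero, htri, -⟩ := hd
  have := htri g h g
  rw [(hzero g g).mpr rfl, hsymm h g] at this
  linarith

theorem dist_one_mul_inv_le (hd : IsRightInvariantCompatibleMetric d) (g h : G) :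
    d 1 (h * g⁻¹) ≤ d 1 g + d 1 h := by
  obtain ⟨hsymm, -, htri, hrinv, -⟩ := hd
  have hshift : d 1 (h * g⁻¹) = d g h := by
    simpa [mul_assoc] using (hrinv 1 (h * g⁻¹) g).symm
  rw [hshift, hsymm 1 g]
  exact htri g 1 h

end IsRightInvariantCompatibleMetric

theorem exists_smul_mem_of_fFn_lt {G Y : Type*} [Group G] [MulAction G Y] {d : G → G → ℝ}
    (hd : ∀ g, 0 ≤ d 1 g) {A : Set Y} {y : Y} {g₀ : G} {c : ℝ} (hc : c ≤ 1)
    (h : fFn d A y g₀ < c) : ∃ g : G, g • g₀ • y ∈ A ∧ d 1 g < c := by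
  unfold fFn at h
  split_ifs at h with hne
  · have hbdd : BddBelow ((fun g => d 1 g) '' {g : G | g • g₀ • y ∈ A}) :=
      ⟨0, by rintro _ ⟨g, -, rfl⟩; exact hd g⟩
    obtain ⟨_, ⟨g, hg, rfl⟩, hlt⟩ := (csInf_lt_iff hbdd (hne.image _)).mp h
    exact ⟨g, hg, hlt⟩
  · linarith

theorem isOpen_setOf_exists_mem_smul {G Y : Type*} [Group G] [MulAction G Y]
    [TopologicalSpace Y] [ContinuousConstSMul G Y] (P : G → Prop) {O : Set Y}
    (hO : IsOpen O) : IsOpen {z : Y | ∃ g : G, P g ∧ z ∈ g • O} := by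
  have hunion : {z : Y | ∃ g : G, P g ∧ z ∈ g • O} = ⋃ g ∈ {g | P g}, g • O := by
    ext z
    simp
  rw [hunion]
  exact isOpen_biUnion fun g _ => hO.smul g

theorem exists_isOpen_forall_smul_mem {G Y : Type*} [Monoid G] [TopologicalSpace G]
    [TopologicalSpace Y] [MulAction G Y] [ContinuousSMul G Y] {d : G → G → ℝ}
    (hbasis : (𝓝 (1 : G)).HasBasis (fun ε : ℝ => 0 < ε) fun ε => {k | d 1 k < ε})
    {U : Set Y} {w : Y} (hU : U ∈ 𝓝 w) :
    ∃ ε > 0, ∃ V : Set Y, IsOpen V ∧ w ∈ V ∧ ∀ k : G, d 1 k < ε → ∀ z ∈ V, k • z ∈ U := by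
  have hsmul : ∀ᶠ p in 𝓝 (1 : G) ×ˢ 𝓝 w, p.1 • p.2 ∈ U := by
    rw [← nhds_prod_eq]
    exact continuous_smul.continuousAt.preimage_mem_nhds (by simpa using hU)
  obtain ⟨⟨ε, V⟩, ⟨hε, hwV, hV⟩, hsub⟩ :=
    (hbasis.prod (nhds_basis_opens w)).eventually_iff.mp hsmul
  exact ⟨ε, hε, V, hV, hwV, fun k hk z hz => hsub (x := (k, z)) ⟨hk, hz⟩⟩

theorem fFn_good_witnesses_general {G Y : Type*} [Group G] [TopologicalSpace G]
    (d : G → G → ℝ) (hd : IsRightInvariantCompatibleMetric d)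
    [TopologicalSpace Y] [PolishSpace Y] [MulAction G Y] [ContinuousSMul G Y]
    (O : Set Y) (hO : IsOpen O) (y : Y) (g₀ : G) (q₀ : ℚ)
    (hq₀ : q₀ ∈ Set.Ioo (0 : ℚ) 1) (h : fFn d O y g₀ < (q₀ : ℝ)) :
    ∃ (On Om : Set Y) (q₁ q₂ : ℚ),
      IsOpen On ∧ IsOpen Om ∧ 0 < q₂ ∧ q₂ < q₁ ∧ q₁ < q₀ ∧
      g₀ • y ∈ On ∧
      closure Om ⊆ {z : Y | ∃ g : G, d 1 g⁻¹ < (q₀ : ℝ) ∧ z ∈ g • O} ∧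
      ∀ (z : Y) (g h' : G),
        d 1 g < (q₁ : ℝ) + (q₂ : ℝ) → g • z ∈ On → d 1 h' < (q₁ : ℝ) → h' • z ∈ Om := by
  obtain ⟨g₁, hg₁O, hg₁⟩ :=
    exists_smul_mem_of_fFn_lt (hd.nonneg_s14 1) (by exact_mod_cast hq₀.2.le) h
  have hW := isOpen_setOf_exists_mem_smul (fun g : G => d 1 g⁻¹ < (q₀ : ℝ)) hO
  have hyW : g₀ • y ∈ {z : Y | ∃ g : G, d 1 g⁻¹ < (q₀ : ℝ) ∧ z ∈ g • O} :=
    ⟨g₁⁻¹, by rwa [inv_inv], mem_inv_smul_set_iff.mpr hg₁O⟩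
  obtain ⟨Om, ⟨hyOm, hOm⟩, hclOm⟩ := (hasBasis_opens_closure _).mem_iff.mp (hW.mem_nhds hyW)
  obtain ⟨ε, hε, On, hOn, hyOn, hOnOm⟩ :=
    exists_isOpen_forall_smul_mem (hd.hasBasis_nhds 1) (hOm.mem_nhds hyOm)
  obtain ⟨r, hr, hrlt⟩ :=
    exists_rat_btwn (lt_min (Rat.cast_pos.mpr hq₀.1) (div_pos hε three_pos))
  have hr_pos : 0 < r := Rat.cast_pos.mp hr
  have hr₀ : r < q₀ := by exact_mod_cast hrlt.trans_le (min_le_left _ _)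
  refine ⟨On, Om, r, r / 2, hOn, hOm, by positivity, by linarith, hr₀, hyOn, hclOm, ?_⟩
  intro z g h' hg hgz hh'
  have hdist : d 1 (h' * g⁻¹) < ε := by
    push_cast at hg
    linarith [hd.dist_one_mul_inv_le g h', min_le_right (q₀ : ℝ) (ε / 3)]
  simpa [smul_smul] using hOnOm _ hdist _ hgz

/-- Let `O ⊆ Y` be open, `y ∈ Y`, `g₀ ∈ G` and `q₀ ∈ ℚ ∩ (0,1)` with
`f_O^y(g₀) < q₀`.  Then there are open `Oₙ, Oₘ ⊆ Y` and rationals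
`0 < q₂ < q₁ < q₀` with `g₀ • y ∈ Oₙ`, `cl(Oₘ) ⊆ W = ⋃ {g • O : d(1,g⁻¹) < q₀}`,
and such that whenever `d(1,g) < q₁ + q₂`, `g • z ∈ Oₙ`, and `d(1,h) < q₁`, then
`h • z ∈ Oₘ`. -/
theorem fFn_good_witnesses {G Y : Type*} [Group G] [TopologicalSpace G]
    [IsTopologicalGroup G] [PolishSpace G]
    (d : G → G → ℝ) (hd : IsRightInvariantCompatibleMetric d)
    [TopologicalSpace Y] [PolishSpace Y] [MulAction G Y] [ContinuousSMul G Y]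
    (O : Set Y) (hO : IsOpen O) (y : Y) (g₀ : G) (q₀ : ℚ)
    (hq₀ : q₀ ∈ Set.Ioo (0 : ℚ) 1) (h : fFn d O y g₀ < (q₀ : ℝ)) :
    ∃ (On Om : Set Y) (q₁ q₂ : ℚ),
      IsOpen On ∧ IsOpen Om ∧ 0 < q₂ ∧ q₂ < q₁ ∧ q₁ < q₀ ∧
      g₀ • y ∈ On ∧
      closure Om ⊆ {z : Y | ∃ g : G, d 1 g⁻¹ < (q₀ : ℝ) ∧ z ∈ g • O} ∧
      ∀ (z : Y) (g h' : G),
        d 1 g < (q₁ : ℝ) + (q₂ : ℝ) → g • z ∈ On → d 1 h' < (q₁ : ℝ) → h' • z ∈ Om :=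
  fFn_good_witnesses_general d hd O hO y g₀ q₀ hq₀ h
end

section
/- (de Vries) Let G be a separable, locally compact, metrizable topological group. Then there exists a Polish space X with a continuous action of G such that for every Polish space Y with a continuous action of G there is an injective, continuous, G-equivariant map π : Y → X. -/
/-- A Polish `G`-space: a Polish topological space equipped with a continuous
action of the topological group `G`. -/
structure PolishGSpace (G : Type*) [Group G] [TopologicalSpace G] where
  carrier : Type*
  [topology : TopologicalSpace carrier]
  polish : PolishSpace carrier
  smul : G → carrier → carrier
  one_smul : ∀ x, smul 1 x = x
  mul_smul : ∀ g h x, smul (g * h) x = smul g (smul h x)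
  continuous_smul : Continuous fun p : G × carrier => smul p.1 p.2

attribute [instance] PolishGSpace.topology

/-!
Let `G` act on `C(G, ℝ^ℕ)` by right translation, `(g • f) x = f (x * g)`. Since `G` is locally
compact and second countable, `C(G, ℝ^ℕ)` with the compact-open topology is Polish and the action
is jointly continuous. A Polish `G`-space `Y` admits a continuous injection `ι : Y → ℝ^ℕ`, and
`y ↦ (g ↦ ι (g • y))` is then a continuous injective equivariant map `Y → C(G, ℝ^ℕ)`.
As `C(G, ℝ^ℕ)` lives in the universe of `G`, the universal space is a homeomorphic copy of it,
obtained through its embedding into `ℓ^∞ = ℕ →ᵇ ℝ`.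
-/

open TopologicalSpace

universe v

theorem TopologicalSpace.exists_homeomorph_in_universe (Z : Type*) [TopologicalSpace Z]
    [T3Space Z] [SecondCountableTopology Z] :
    ∃ (W : Type v) (_ : TopologicalSpace W), Nonempty (W ≃ₜ Z) := by
  obtain ⟨j, hj⟩ := exists_embedding_l_infty Z
  exact ⟨ULift (Set.range j), inferInstance, ⟨Homeomorph.ulift.trans hj.toHomeomorph.symm⟩⟩

theorem TopologicalSpace.exists_continuous_injective_nat_real (Z : Type*) [TopologicalSpace Z]
    [T3Space Z] [SecondCountableTopology Z] :
    ∃ f : Z → ℕ → ℝ, Continuous f ∧ Function.Injective f := by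
  obtain ⟨j, hj⟩ := exists_embedding_l_infty Z
  exact ⟨fun z => j z, BoundedContinuousFunction.continuous_coe.comp hj.continuous,
    DFunLike.coe_injective.comp hj.injective⟩

namespace PolishGSpace

section

variable {G : Type*} [Group G] [TopologicalSpace G]

def InjectsInto (Y X : PolishGSpace G) : Prop :=
  ∃ π : Y.carrier → X.carrier,
    Function.Injective π ∧ Continuous π ∧
      ∀ (g : G) (y : Y.carrier), π (Y.smul g y) = X.smul g (π y)

theorem InjectsInto.trans {Y X W : PolishGSpace G} (hYX : Y.InjectsInto X) (hXW : X.InjectsInto W) :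
    Y.InjectsInto W := by
  obtain ⟨π, hπi, hπc, hπe⟩ := hYX
  obtain ⟨ρ, hρi, hρc, hρe⟩ := hXW
  exact ⟨ρ ∘ π, hρi.comp hπi, hρc.comp hπc, fun g y => by simp [hπe, hρe]⟩

def ofHomeomorph (X : PolishGSpace G) {W : Type*} [TopologicalSpace W] (e : W ≃ₜ X.carrier) :
    PolishGSpace G where
  carrier := W
  polish := have := X.polish; e.isClosedEmbedding.polishSpace
  smul g w := e.symm (X.smul g (e w))
  one_smul w := by simp [X.one_smul]
  mul_smul g h w := by simp [X.mul_smul]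
  continuous_smul := by have := X.continuous_smul; fun_prop

theorem injectsInto_ofHomeomorph (X : PolishGSpace G) {W : Type*} [TopologicalSpace W]
    (e : W ≃ₜ X.carrier) : X.InjectsInto (X.ofHomeomorph e) :=
  ⟨e.symm, e.symm.injective, e.symm.continuous, fun g x => by simp [ofHomeomorph]⟩

end

section

variable (G : Type*) [Group G] [TopologicalSpace G] [ContinuousMul G] [LocallyCompactSpace G]
  [SecondCountableTopology G] (Z : Type*) [TopologicalSpace Z] [PolishSpace Z]

def rightTranslation : PolishGSpace G where
  carrier := C(G, Z)
  polish := by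
    let := upgradeIsCompletelyMetrizable Z
    have : MetrizableSpace C(G, Z) := UniformSpace.metrizableSpace
    infer_instance
  smul g f := f.comp ⟨(· * g), continuous_mul_const g⟩
  one_smul f := by ext; simp
  mul_smul g h f := by ext; simp [mul_assoc]
  -- evaluation `C(G, Z) × G → Z` is jointly continuous because `G` is locally compact
  continuous_smul :=
    (ContinuousMap.curry ⟨fun q : (G × C(G, Z)) × G => q.1.2 (q.2 * q.1.1), by fun_prop⟩).continuous

variable {G Z} in
theorem injectsInto_rightTranslation (Y : PolishGSpace G) {ι : Y.carrier → Z}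
    (hιc : Continuous ι) (hιi : Function.Injective ι) : Y.InjectsInto (rightTranslation G Z) := by
  refine ⟨fun y => ⟨fun g => ι (Y.smul g y), by have := Y.continuous_smul; fun_prop⟩, ?_, ?_, ?_⟩
  · intro y z hyz
    have := congrArg (fun f : C(G, Z) => f 1) hyz
    simpa [Y.one_smul] using hιi this
  · exact (ContinuousMap.curry ⟨fun p : Y.carrier × G => ι (Y.smul p.2 p.1),
      by have := Y.continuous_smul; fun_prop⟩).continuous
  · intro g y
    refine ContinuousMap.ext fun x => ?_
    simp [rightTranslation, Y.mul_smul]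

end

end PolishGSpace

/-- (de Vries) Let `G` be a separable, locally compact, metrizable topological
group.  Then there is a Polish space `X` with a continuous `G`-action such that
every Polish space `Y` with a continuous `G`-action admits an injective,
continuous, `G`-equivariant map `π : Y → X`. -/
theorem deVries_exists_continuously_universal_PolishGSpace
    (G : Type*) [Group G] [TopologicalSpace G] [IsTopologicalGroup G]
    [LocallyCompactSpace G] [TopologicalSpace.SeparableSpace G]
    [TopologicalSpace.MetrizableSpace G] :
    ∃ X : PolishGSpace G, ∀ Y : PolishGSpace G,
      ∃ π : Y.carrier → X.carrier,
        Function.Injective π ∧ Continuous π ∧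
        ∀ (g : G) (y : Y.carrier), π (Y.smul g y) = X.smul g (π y) := by
  have : SecondCountableTopology G := by
    let := metrizableSpaceMetric G
    infer_instance
  let X := PolishGSpace.rightTranslation G (ℕ → ℝ)
  have := X.polish
  obtain ⟨W, _, ⟨e⟩⟩ := exists_homeomorph_in_universe X.carrier
  refine ⟨X.ofHomeomorph e, fun Y => ?_⟩
  have := Y.polish
  obtain ⟨ι, hιc, hιi⟩ := exists_continuous_injective_nat_real Y.carrier
  exact (Y.injectsInto_rightTranslation hιc hιi).trans (PolishGSpace.injectsInto_ofHomeomorph _ e)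
end
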